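/- arXiv:2602.17064 — 5 statements merged into one kernel-verified Lean document; each statement's English description precedes it below -/
import Mathlib

section
/- Let H be a real Hilbert space, D ⊆ H a nonempty set, and T : H → H quasinonexpansive on D. Then Fix T ∩ D equals the intersection over all x ∈ D of the sets {y ∈ D | ⟨y − Tx, x − Tx⟩ ≤ (1/2)‖Tx − x‖²}. -/
open Filter Topology TopologicalSpace Function

variable {H : Type*} [NormedAddCommGroup H] [InnerProductSpace ℝ H]

def WeakConverge (x : ℕ → H) (p : H) : Prop :=
  Tendsto ((toWeakSpace ℝ H) ∘ x) atTop (nhds ((toWeakSpace ℝ H) p))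

def FixSet (T : H → H) : Set H := {x | Function.IsFixedPt T x}

def QuasiNonexpansiveOn (T : H → H) (s : Set H) : Prop :=
  ∀ ⦃x⦄, x ∈ s → ∀ ⦃y⦄, y ∈ FixSet T ∩ s → ‖T x - y‖ ≤ ‖x - y‖

def NonexpansiveOn (T : H → H) (s : Set H) : Prop := LipschitzOnWith 1 T s

/- Expand `‖a - y‖² = ‖(a - b) + (b - y)‖²` and compare squares of norms. -/
lemma real_inner_le_half_norm_sub_sq_iff_norm_sub_le (a b y : H) :
    inner ℝ (y - b) (a - b) ≤ (1/2) * ‖b - a‖ ^ 2 ↔ ‖b - y‖ ≤ ‖a - y‖ := by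
  have hexpand : ‖a - y‖ ^ 2 = ‖a - b‖ ^ 2 - 2 * inner ℝ (y - b) (a - b) + ‖b - y‖ ^ 2 := by
    rw [← sub_add_sub_cancel a b y, norm_add_sq_real, ← neg_sub y b, inner_neg_right,
      real_inner_comm]
    ring
  rw [← sq_le_sq₀ (norm_nonneg _) (norm_nonneg _), hexpand, norm_sub_rev b a]
  constructor <;> intro h <;> linarith

lemma QuasiNonexpansiveOn.inner_le_half_norm_sub_sq {T : H → H} {D : Set H}
    (hT : QuasiNonexpansiveOn T D) {x y : H} (hx : x ∈ D) (hy : y ∈ FixSet T ∩ D) :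
    inner ℝ (y - T x) (x - T x) ≤ (1/2) * ‖T x - x‖ ^ 2 :=
  (real_inner_le_half_norm_sub_sq_iff_norm_sub_le x (T x) y).mpr (hT hx hy)

lemma mem_fixSet_of_inner_le_half_norm_sub_sq {T : H → H} {y : H}
    (hy : inner ℝ (y - T y) (y - T y) ≤ (1/2) * ‖T y - y‖ ^ 2) : y ∈ FixSet T := by
  have hle := (real_inner_le_half_norm_sub_sq_iff_norm_sub_le y (T y) y).mp hy
  rw [sub_self, norm_zero, norm_le_zero_iff, sub_eq_zero] at hle
  exact hle

theorem quasinonexpansive_fixedPoint_characterization {D : Set H} {T : H → H}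
    (hD_nonempty : D.Nonempty) (hT_quasi : QuasiNonexpansiveOn T D) :
    FixSet T ∩ D =
      ⋂ x ∈ D, {y ∈ D | (inner ℝ (y - T x) (x - T x) : ℝ) ≤ (1/2) * ‖T x - x‖ ^ 2} := by
  ext y
  simp only [Set.mem_iInter]
  constructor
  · intro hy x hx
    exact ⟨hy.2, hT_quasi.inner_le_half_norm_sub_sq hx hy⟩
  · intro hy
    obtain ⟨x₀, hx₀⟩ := hD_nonempty
    have hyD : y ∈ D := (hy x₀ hx₀).1
    exact ⟨mem_fixSet_of_inner_le_half_norm_sub_sq (hy y hyD).2, hyD⟩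
end

section
/- Let H be a real Hilbert space and D ⊆ H a nonempty closed convex set. If T : H → H is quasinonexpansive on D, then Fix T ∩ D is closed and convex. -/
open Filter Topology TopologicalSpace Function

variable {H : Type*} [NormedAddCommGroup H] [InnerProductSpace ℝ H]

/-! `Fix T ∩ D` is the trace on `D` of the intersection, over `x ∈ D`, of the sets of points at
least as close to `T x` as to `x`. Each of these is a closed half-space (or all of `H`), because
`‖a - y‖² ≤ ‖b - y‖²` is affine in `y`; conversely, taking `x = y` forces `T y = y`. -/

theorem norm_sub_le_norm_sub_iff_two_inner_le (a b y : H) :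
    ‖a - y‖ ≤ ‖b - y‖ ↔ 2 * inner ℝ (b - a) y ≤ ‖b‖ ^ 2 - ‖a‖ ^ 2 := by
  rw [← pow_le_pow_iff_left₀ (norm_nonneg _) (norm_nonneg _) two_ne_zero,
    norm_sub_sq_real, norm_sub_sq_real, inner_sub_left]
  constructor <;> intro h <;> linarith

theorem convex_setOf_norm_sub_le_norm_sub (a b : H) :
    Convex ℝ {y : H | ‖a - y‖ ≤ ‖b - y‖} := by
  simp only [norm_sub_le_norm_sub_iff_two_inner_le]
  exact convex_halfSpace_le ((2 : ℝ) • innerₛₗ ℝ (b - a)).isLinear _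

omit [InnerProductSpace ℝ H] in
theorem QuasiNonexpansiveOn.fixSet_inter_eq {T : H → H} {D : Set H}
    (hT : QuasiNonexpansiveOn T D) :
    FixSet T ∩ D = D ∩ ⋂ x ∈ D, {y | ‖T x - y‖ ≤ ‖x - y‖} := by
  ext y
  simp only [Set.mem_inter_iff, Set.mem_iInter, Set.mem_ofPred_eq]
  constructor
  · intro hy
    exact ⟨hy.2, fun x hx => hT hx hy⟩
  · rintro ⟨hyD, hy⟩
    have hTy : ‖T y - y‖ ≤ 0 := by simpa using hy y hyD
    exact ⟨sub_eq_zero.mp (norm_le_zero_iff.mp hTy), hyD⟩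

theorem quasinonexpansive_fixedPoint_closed_convex_general {C D : Set H}
    (hD_closed : IsClosed D) (hD_convex : Convex ℝ D)
    {T : H → H} (hT : QuasiNonexpansiveOn T D) (hC : C = FixSet T ∩ D) :
    IsClosed C ∧ Convex ℝ C := by
  rw [hC, hT.fixSet_inter_eq]
  exact ⟨hD_closed.inter (isClosed_biInter fun x _ => isClosed_le (by fun_prop) (by fun_prop)),
    hD_convex.inter (convex_iInter₂ fun x _ => convex_setOf_norm_sub_le_norm_sub _ _)⟩

theorem quasinonexpansive_fixedPoint_closed_convex {C D : Set H}
    (hD_closed : IsClosed D) (hD_convex : Convex ℝ D) (hD_nonempty : D.Nonempty)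
    {T : H → H} (hT : QuasiNonexpansiveOn T D) (hC : C = FixSet T ∩ D) :
    IsClosed C ∧ Convex ℝ C :=
  quasinonexpansive_fixedPoint_closed_convex_general hD_closed hD_convex hT hC
end

section
/- (Browder's demiclosedness principle) Let H be a real Hilbert space and D ⊆ H. If T : H → H is nonexpansive on D (i.e., 1-Lipschitz on D), then the operator Id − T is demiclosed on D: for every u ∈ H, whenever D is nonempty and weakly sequentially closed, and (x_n) is a sequence in D converging weakly to some l ∈ D with (x_n − T x_n) converging strongly to u, we have l − T l = u. -/
/-!
For `T` nonexpansive, `S = id - T` is `1/2`-cocoercive: `‖S x - S y‖² ≤ 2 ⟪x - y, S x - S y⟫`,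
which is `‖T x - T y‖² ≤ ‖x - y‖²` expanded. Take `x = xₙ`, `y = l`. The left side tends to
`‖u - S l‖²`. The right side tends to `2 ⟪l - l, u - S l⟫ = 0`, because the inner product of a
weakly and a strongly convergent sequence converges to the inner product of the limits, weakly
convergent sequences being bounded by the uniform boundedness principle. Hence `S l = u`.
-/

open Filter Topology TopologicalSpace Function

variable {H : Type*} [NormedAddCommGroup H] [InnerProductSpace ℝ H]

def IsWeaklySeqClosed (s : Set H) : Prop := IsSeqClosed ((toWeakSpace ℝ H) '' s)

def DemiclosedAt (D : Set H) (T : H → H) (u : H) : Prop :=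
  D.Nonempty → IsWeaklySeqClosed D →
    ∀ x : ℕ → H, (∀ n, x n ∈ D) → ∀ l : H, l ∈ D → WeakConverge x l →
      Tendsto (fun n => T (x n)) atTop (nhds u) → T l = u

def DemiclosedOn (T : H → H) (D : Set H) : Prop := ∀ u : H, DemiclosedAt D T u

open scoped RealInnerProductSpace

namespace WeakConverge

variable {x : ℕ → H} {l : H}

theorem tendsto_inner_const (hx : WeakConverge x l) (y : H) :
    Tendsto (fun n => ⟪x n, y⟫) atTop (𝓝 ⟪l, y⟫) := by
  have h : Tendsto (fun n => ⟪y, x n⟫) atTop (𝓝 ⟪y, l⟫) :=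
    (WeakBilin.eval_continuous _ (innerSL ℝ y)).continuousAt.tendsto.comp hx
  simpa only [real_inner_comm y] using h

theorem exists_forall_norm_le [CompleteSpace H] (hx : WeakConverge x l) :
    ∃ C, ∀ n, ‖x n‖ ≤ C := by
  have hpointwise : ∀ y, ∃ C, ∀ n, ‖innerSL ℝ (x n) y‖ ≤ C := fun y => by
    obtain ⟨C, hC⟩ := isBounded_iff_forall_norm_le.mp
      (Metric.isBounded_range_of_tendsto _ (hx.tendsto_inner_const y))
    exact ⟨C, fun n => hC _ ⟨n, rfl⟩⟩
  obtain ⟨C, hC⟩ := banach_steinhaus hpointwise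
  exact ⟨C, fun n => innerSL_apply_norm ℝ (x n) ▸ hC n⟩

theorem tendsto_inner [CompleteSpace H] (hx : WeakConverge x l) {y : ℕ → H} {u : H}
    (hy : Tendsto y atTop (𝓝 u)) : Tendsto (fun n => ⟪x n, y n⟫) atTop (𝓝 ⟪l, u⟫) := by
  obtain ⟨C, hC⟩ := hx.exists_forall_norm_le
  have hsmall : Tendsto (fun n => ⟪x n, y n - u⟫) atTop (𝓝 0) := by
    have hdist : Tendsto (fun n => C * ‖y n - u‖) atTop (𝓝 0) := by
      simpa using (tendsto_iff_norm_sub_tendsto_zero.mp hy).const_mul C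
    refine squeeze_zero_norm (fun n => ?_) hdist
    exact (norm_inner_le_norm _ _).trans (mul_le_mul_of_nonneg_right (hC n) (norm_nonneg _))
  simpa [← inner_add_right] using hsmall.add (hx.tendsto_inner_const u)

end WeakConverge

theorem NonexpansiveOn.sq_norm_sub_le_two_inner {T : H → H} {D : Set H} (hT : NonexpansiveOn T D)
    {x y : H} (hx : x ∈ D) (hy : y ∈ D) :
    ‖(x - T x) - (y - T y)‖ ^ 2 ≤ 2 * ⟪x - y, (x - T x) - (y - T y)⟫ := by
  have hle : ‖T x - T y‖ ≤ ‖x - y‖ := by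
    simpa [dist_eq_norm] using hT.dist_le_mul x hx y hy
  have hsplit : T x - T y = (x - y) - ((x - T x) - (y - T y)) := by abel
  have hsq := pow_le_pow_left₀ (norm_nonneg _) hle 2
  rw [hsplit, norm_sub_sq_real] at hsq
  linarith

theorem browder_demiclosed_principle [CompleteSpace H] {D : Set H} {T : H → H}
    (hT_nonexp : NonexpansiveOn T D) : DemiclosedOn (id - T) D := by
  intro u _ _ x hxD l hlD hx hS
  simp only [Pi.sub_apply, id] at hS ⊢
  set v := l - T l
  have hSv : Tendsto (fun n => (x n - T (x n)) - v) atTop (𝓝 (u - v)) := hS.sub_const v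
  have hlhs : Tendsto (fun n => ‖(x n - T (x n)) - v‖ ^ 2) atTop (𝓝 (‖u - v‖ ^ 2)) :=
    hSv.norm.pow 2
  have hrhs : Tendsto (fun n => 2 * ⟪x n - l, (x n - T (x n)) - v⟫) atTop (𝓝 (2 * 0)) := by
    simp_rw [inner_sub_left]
    simpa using ((hx.tendsto_inner hSv).sub ((tendsto_const_nhds (x := l)).inner hSv)).const_mul 2
  have hsq : ‖u - v‖ ^ 2 ≤ 2 * 0 := le_of_tendsto_of_tendsto' hlhs hrhs
    fun n => hT_nonexp.sq_norm_sub_le_two_inner (hxD n) hlD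
  have huv : u - v = 0 := by simpa using hsq
  exact (sub_eq_zero.mp huv).symm
end

section
/- Let H be a separable real Hilbert space, D ⊆ H nonempty, and (x_n) a sequence that is Fejér monotone with respect to D. If every weak subsequential limit point of (x_n) belongs to D, then (x_n) converges weakly to some point p₀ ∈ D. -/
open Filter Topology TopologicalSpace Function

variable {H : Type*} [NormedAddCommGroup H] [InnerProductSpace ℝ H]

def IsFejerMonotone (x : ℕ → H) (D : Set H) : Prop :=
  ∀ y ∈ D, ∀ n, ‖x (n + 1) - y‖ ≤ ‖x n - y‖

def WeakSubseqLimitPt (p : H) (x : ℕ → H) : Prop :=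
  ∃ φ : ℕ → ℕ, StrictMono φ ∧ WeakConverge (x ∘ φ) p

open RealInnerProductSpace in
lemma weakConverge_iff_inner [CompleteSpace H] (x : ℕ → H) (p : H) :
    WeakConverge x p ↔ ∀ v : H, Tendsto (fun n => ⟪x n, v⟫) atTop (𝓝 ⟪p, v⟫) := by
  have hinj : Function.Injective ((topDualPairing ℝ H).flip) := by
    intro a b hab
    have h := congrArg (fun f => f (InnerProductSpace.toDual ℝ H (a - b))) hab
    simp only [LinearMap.flip_apply, topDualPairing_apply,
      InnerProductSpace.toDual_apply_apply] at h
    have h0 : ⟪a - b, a - b⟫ = 0 := by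
      rw [inner_sub_right]
      linarith [h]
    have := inner_self_eq_zero.mp h0
    exact sub_eq_zero.mp this
  constructor
  · intro hconv v
    have h := (WeakBilin.tendsto_iff_forall_eval_tendsto _ hinj).mp hconv
      (InnerProductSpace.toDual ℝ H v)
    have h' : Tendsto (fun n => ⟪v, x n⟫) atTop (𝓝 ⟪v, p⟫) := h
    have h2 : ⟪p, v⟫ = ⟪v, p⟫ := real_inner_comm v p
    rw [h2]
    exact h'.congr fun n => real_inner_comm (x n) v
  · intro hv
    refine (WeakBilin.tendsto_iff_forall_eval_tendsto _ hinj).mpr ?_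
    intro l
    obtain ⟨w, rfl⟩ := (InnerProductSpace.toDual ℝ H).surjective l
    have h' : Tendsto (fun n => ⟪w, x n⟫) atTop (𝓝 ⟪w, p⟫) := by
      have h2 : ⟪p, w⟫ = ⟪w, p⟫ := real_inner_comm w p
      rw [← h2]
      exact (hv w).congr fun n => real_inner_comm w (x n)
    exact h'

open RealInnerProductSpace in
lemma exists_weak_subseq_limit [SeparableSpace H] [CompleteSpace H]
    (x : ℕ → H) (C : ℝ) (hb : ∀ n, ‖x n‖ ≤ C) : ∃ p : H, WeakSubseqLimitPt p x := by
  have : Nonempty H := ⟨0⟩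
  set e : ℕ → H := TopologicalSpace.denseSeq H with he
  have hdense : DenseRange e := TopologicalSpace.denseRange_denseSeq H
  have hC0 : 0 ≤ C := (norm_nonneg (x 0)).trans (hb 0)
  set S : Set (ℕ → ℝ) := Set.pi Set.univ (fun k => Set.Icc (-(C * ‖e k‖)) (C * ‖e k‖)) with hS
  have hScomp : IsCompact S := isCompact_univ_pi (fun k => isCompact_Icc)
  have hmem : ∀ n, (fun k => ⟪x n, e k⟫) ∈ S := by
    intro n k _
    have h1 : |⟪x n, e k⟫| ≤ ‖x n‖ * ‖e k‖ := abs_real_inner_le_norm _ _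
    have h2 : ‖x n‖ * ‖e k‖ ≤ C * ‖e k‖ :=
      mul_le_mul_of_nonneg_right (hb n) (norm_nonneg _)
    obtain ⟨ha, hb'⟩ := abs_le.mp (h1.trans h2)
    exact ⟨ha, hb'⟩
  obtain ⟨c, -, φ, hφ, hconv⟩ :=
    hScomp.tendsto_subseq (x := fun n k => ⟪x n, e k⟫) (fun n => hmem n)
  have hcoord : ∀ k, Tendsto (fun n => ⟪x (φ n), e k⟫) atTop (𝓝 (c k)) := by
    intro k
    exact (tendsto_pi_nhds.mp hconv) k
  -- each ⟪x (φ n), v⟫ is Cauchy, hence convergent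
  have hcauchy : ∀ v : H, ∃ L : ℝ, Tendsto (fun n => ⟪x (φ n), v⟫) atTop (𝓝 L) := by
    intro v
    refine cauchySeq_tendsto_of_complete ?_
    rw [Metric.cauchySeq_iff]
    intro ε hε
    have hδ : (0:ℝ) < ε / (4 * (C + 1)) := by positivity
    obtain ⟨k, hk⟩ := Metric.denseRange_iff.mp hdense v (ε / (4 * (C + 1))) hδ
    rw [dist_comm, dist_eq_norm] at hk
    obtain ⟨N, hN⟩ := Metric.cauchySeq_iff.mp (hcoord k).cauchySeq (ε / 2) (by positivity)
    refine ⟨N, fun m hm n hn => ?_⟩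
    have hsplit : ∀ a b : H, ⟪a, v⟫ - ⟪b, v⟫
        = (⟪a, e k⟫ - ⟪b, e k⟫) + ⟪a - b, v - e k⟫ := by
      intro a b
      rw [inner_sub_right, inner_sub_left, inner_sub_left]
      ring
    have hd : dist (⟪x (φ m), v⟫) (⟪x (φ n), v⟫)
        ≤ dist (⟪x (φ m), e k⟫) (⟪x (φ n), e k⟫)
          + ‖x (φ m) - x (φ n)‖ * ‖e k - v‖ := by
      rw [Real.dist_eq, Real.dist_eq, hsplit]
      refine (abs_add_le _ _).trans ?_
      gcongr
      have := abs_real_inner_le_norm (x (φ m) - x (φ n)) (v - e k)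
      rwa [show ‖v - e k‖ = ‖e k - v‖ from norm_sub_rev v (e k)] at this
    have hnorm : ‖x (φ m) - x (φ n)‖ ≤ 2 * (C + 1) := by
      have := norm_sub_le (x (φ m)) (x (φ n))
      have h1 := hb (φ m); have h2 := hb (φ n)
      linarith
    have h2nd : ‖x (φ m) - x (φ n)‖ * ‖e k - v‖ < ε / 2 := by
      calc ‖x (φ m) - x (φ n)‖ * ‖e k - v‖
          ≤ 2 * (C + 1) * ‖e k - v‖ := by
            exact mul_le_mul_of_nonneg_right hnorm (norm_nonneg _)
        _ < 2 * (C + 1) * (ε / (4 * (C + 1))) := by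
            have hpos : (0:ℝ) < 2 * (C + 1) := by linarith
            exact (mul_lt_mul_iff_right₀ hpos).mpr hk
        _ = ε / 2 := by field_simp; ring
    calc dist (⟪x (φ m), v⟫) (⟪x (φ n), v⟫)
        ≤ dist (⟪x (φ m), e k⟫) (⟪x (φ n), e k⟫)
          + ‖x (φ m) - x (φ n)‖ * ‖e k - v‖ := hd
      _ < ε / 2 + ε / 2 := by
          exact add_lt_add (hN m hm n hn) h2nd
      _ = ε := by ring
  choose F hF using hcauchy
  -- F is a bounded linear functional
  have hFadd : ∀ v w : H, F (v + w) = F v + F w := by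
    intro v w
    refine tendsto_nhds_unique (hF (v + w)) ?_
    have := (hF v).add (hF w)
    simpa [inner_add_right] using this
  have hFsmul : ∀ (r : ℝ) (v : H), F (r • v) = r * F v := by
    intro r v
    refine tendsto_nhds_unique (hF (r • v)) ?_
    have := (hF v).const_mul r
    simpa [real_inner_smul_right] using this
  have hFbound : ∀ v : H, |F v| ≤ C * ‖v‖ := by
    intro v
    refine le_of_tendsto (hF v).abs (Eventually.of_forall fun n => ?_)
    calc |⟪x (φ n), v⟫| ≤ ‖x (φ n)‖ * ‖v‖ := abs_real_inner_le_norm _ _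
      _ ≤ C * ‖v‖ := mul_le_mul_of_nonneg_right (hb _) (norm_nonneg _)
  let f : H →ₗ[ℝ] ℝ :=
    { toFun := F, map_add' := hFadd, map_smul' := hFsmul }
  let f' : H →L[ℝ] ℝ := f.mkContinuous C (fun v => by
    simpa [Real.norm_eq_abs, f] using hFbound v)
  refine ⟨(InnerProductSpace.toDual ℝ H).symm f', φ, hφ, ?_⟩
  rw [weakConverge_iff_inner]
  intro v
  have hpv : ⟪(InnerProductSpace.toDual ℝ H).symm f', v⟫ = F v :=
    InnerProductSpace.toDual_symm_apply
  rw [hpv]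
  exact hF v

open RealInnerProductSpace in
theorem WeakConv_of_Fejermonotone_of_clusterpt_in [SeparableSpace H] [CompleteSpace H]
    (D : Set H) (hD : D.Nonempty) (x : ℕ → H)
    (hx : IsFejerMonotone x D)
    (hw : ∀ p : H, WeakSubseqLimitPt p x → p ∈ D) :
    ∃ p0 ∈ D, WeakConverge x p0 := by
  obtain ⟨y, hy⟩ := hD
  have hanti : ∀ a ∈ D, Antitone fun n => ‖x n - a‖ := fun a ha =>
    antitone_nat_of_succ_le (hx a ha)
  set C : ℝ := ‖x 0 - y‖ + ‖y‖ with hC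
  have hbound : ∀ n, ‖x n‖ ≤ C := by
    intro n
    have h1 : ‖x n‖ ≤ ‖x n - y‖ + ‖y‖ := by
      simpa using norm_add_le (x n - y) y
    have h2 : ‖x n - y‖ ≤ ‖x 0 - y‖ := hanti y hy (Nat.zero_le n)
    linarith
  -- distances to points of D converge
  have hdist : ∀ a ∈ D, ∃ L : ℝ, Tendsto (fun n => ‖x n - a‖) atTop (𝓝 L) := by
    intro a ha
    exact ⟨_, tendsto_atTop_ciInf (hanti a ha) ⟨0, fun r ⟨n, hn⟩ => hn ▸ norm_nonneg _⟩⟩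
  -- inner products with differences of points of D converge
  have hic : ∀ p q : H, p ∈ D → q ∈ D →
      ∃ c : ℝ, Tendsto (fun n => ⟪x n, q - p⟫) atTop (𝓝 c) := by
    intro p q hp hq
    obtain ⟨Lp, hLp⟩ := hdist p hp
    obtain ⟨Lq, hLq⟩ := hdist q hq
    refine ⟨(Lp ^ 2 - Lq ^ 2 - ‖p‖ ^ 2 + ‖q‖ ^ 2) / 2, ?_⟩
    have h1 : Tendsto (fun n => (‖x n - p‖ ^ 2 - ‖x n - q‖ ^ 2 - ‖p‖ ^ 2 + ‖q‖ ^ 2) / 2)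
        atTop (𝓝 ((Lp ^ 2 - Lq ^ 2 - ‖p‖ ^ 2 + ‖q‖ ^ 2) / 2)) := by
      exact (((hLp.pow 2).sub (hLq.pow 2)).sub_const (‖p‖ ^ 2) |>.add_const (‖q‖ ^ 2)).div_const 2
    refine h1.congr fun n => ?_
    have ep := norm_sub_sq_real (x n) p
    have eq' := norm_sub_sq_real (x n) q
    rw [inner_sub_right]
    nlinarith [ep, eq']
  -- uniqueness of weak subsequential limit points
  have huniq : ∀ p q : H, WeakSubseqLimitPt p x → WeakSubseqLimitPt q x → p = q := by
    intro p q hp hq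
    have hpD := hw p hp
    have hqD := hw q hq
    obtain ⟨c, hc⟩ := hic p q hpD hqD
    obtain ⟨φ, hφ, hφc⟩ := hp
    obtain ⟨ψ, hψ, hψc⟩ := hq
    have h1 : Tendsto (fun n => ⟪x (φ n), q - p⟫) atTop (𝓝 ⟪p, q - p⟫) :=
      (weakConverge_iff_inner _ _).mp hφc (q - p)
    have h1' : Tendsto (fun n => ⟪x (φ n), q - p⟫) atTop (𝓝 c) :=
      hc.comp (hφ.tendsto_atTop)
    have h2 : Tendsto (fun n => ⟪x (ψ n), q - p⟫) atTop (𝓝 ⟪q, q - p⟫) :=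
      (weakConverge_iff_inner _ _).mp hψc (q - p)
    have h2' : Tendsto (fun n => ⟪x (ψ n), q - p⟫) atTop (𝓝 c) :=
      hc.comp (hψ.tendsto_atTop)
    have e1 : ⟪p, q - p⟫ = c := tendsto_nhds_unique h1 h1'
    have e2 : ⟪q, q - p⟫ = c := tendsto_nhds_unique h2 h2'
    have h0 : ⟪q - p, q - p⟫ = 0 := by rw [inner_sub_left]; linarith
    have := inner_self_eq_zero.mp h0
    exact (sub_eq_zero.mp this).symm
  obtain ⟨p0, hp0⟩ := exists_weak_subseq_limit x C hbound
  refine ⟨p0, hw p0 hp0, ?_⟩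
  rw [weakConverge_iff_inner]
  intro v
  by_contra hcon
  rw [Metric.tendsto_atTop] at hcon
  push_neg at hcon
  obtain ⟨ε, hε, hεfreq⟩ := hcon
  obtain ⟨ψ, hψ, hψspec⟩ := Filter.extraction_of_frequently_atTop
    (P := fun n => ε ≤ dist (⟪x n, v⟫) (⟪p0, v⟫))
    (frequently_atTop.mpr fun N => (hεfreq N).imp fun n hn => ⟨hn.1, hn.2⟩)
  obtain ⟨q, ρ, hρ, hρc⟩ := exists_weak_subseq_limit (x ∘ ψ) C (fun n => hbound (ψ n))
  have hq : WeakSubseqLimitPt q x := ⟨ψ ∘ ρ, hψ.comp hρ, hρc⟩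
  have hqp : q = p0 := huniq q p0 hq hp0
  have htend : Tendsto (fun n => ⟪x (ψ (ρ n)), v⟫) atTop (𝓝 ⟪p0, v⟫) := by
    have := (weakConverge_iff_inner _ _).mp hρc v
    rw [hqp] at this
    exact this
  obtain ⟨N, hN⟩ := (Metric.tendsto_atTop.mp htend) ε hε
  have h1 := hN N le_rfl
  have h2 := hψspec (ρ N)
  linarith
end

section
/- (Convergence of Halpern iteration) Let H be a separable real Hilbert space, D ⊆ H nonempty closed convex, T : H → H nonexpansive on D with T(D) ⊆ D, and C := Fix T ∩ D nonempty. Let u, x_0 ∈ D and let (x_n) be generated by x_{n+1} = α_n u + (1 − α_n) T x_n, with all x_n ∈ D, where α_n ∈ (0,1), α_n → 0, ∑ α_n = +∞, and ∑ |α_{n+1} − α_n| < +∞. Then there exists p ∈ C such that (x_n) converges strongly to p and ‖u − p‖ = inf_{w ∈ C} ‖u − w‖, i.e., p is the projection of u onto C. -/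
open Filter Topology TopologicalSpace Function

variable {H : Type*} [NormedAddCommGroup H] [InnerProductSpace ℝ H]

structure Halpern (T : H → H) where
  x0 : H
  u : H
  x : ℕ → H
  α : ℕ → ℝ
  update : ∀ k : ℕ, x (k + 1) = (α k) • u + (1 - α k) • (T (x k))
  initial_value : x 0 = x0

/-!
Halpern's argument, following Wittmann and Xu. Each step is a convex combination of `u` and
`T xₙ`, so the iterates stay in a ball around any point of `C`. Subtracting consecutive steps gives
`‖xₙ₊₂ - xₙ₊₁‖ ≤ (1 - αₙ₊₁) ‖xₙ₊₁ - xₙ‖ + K |αₙ₊₁ - αₙ|`, so by Xu's lemma on recursive real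
inequalities the steps tend to `0`, and since `αₙ → 0` so does `‖xₙ - T xₙ‖`. Weak cluster points
of `(xₙ)` then lie in `D` and are fixed by `T` (demiclosedness of `I - T`), and the variational
characterisation of the projection `p` of `u` onto `C` yields `limsup ⟪xₙ - p, u - p⟫ ≤ 0`.
Weak cluster points are taken along ultrafilters, along which every bounded sequence has a weak
limit by Banach–Alaoglu. Finally
`‖xₙ₊₁ - p‖² ≤ (1 - αₙ) ‖xₙ - p‖² + 2 αₙ ⟪xₙ₊₁ - p, u - p⟫`, and Xu's lemma again gives `xₙ → p`.
-/

open scoped InnerProductSpace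

lemma le_exp_neg_sum_mul_add_sum {u a c : ℕ → ℝ} (hu : ∀ n, 0 ≤ u n) (ha : ∀ n, 0 ≤ a n)
    (hc : ∀ n, 0 ≤ c n) (hrec : ∀ n, u (n + 1) ≤ (1 - a n) * u n + c n) (n : ℕ) :
    u n ≤ Real.exp (-∑ k ∈ Finset.range n, a k) * u 0 + ∑ k ∈ Finset.range n, c k := by
  induction n with
  | zero => simp
  | succ n ih =>
    have hexp : 1 - a n ≤ Real.exp (-a n) := by linarith [Real.add_one_le_exp (-a n)]
    have hexp_le_one : Real.exp (-a n) ≤ 1 := Real.exp_le_one_iff.2 (by linarith [ha n])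
    have hsum : 0 ≤ ∑ k ∈ Finset.range n, c k := Finset.sum_nonneg fun k _ => hc k
    calc u (n + 1) ≤ Real.exp (-a n) * u n + c n := by
          linarith [hrec n, mul_le_mul_of_nonneg_right hexp (hu n)]
      _ ≤ Real.exp (-a n) * (Real.exp (-∑ k ∈ Finset.range n, a k) * u 0
            + ∑ k ∈ Finset.range n, c k) + c n := by gcongr
      _ ≤ _ := by
          rw [Finset.sum_range_succ, Finset.sum_range_succ, neg_add, Real.exp_add]
          linarith [mul_le_mul_of_nonneg_right hexp_le_one hsum]

theorem tendsto_zero_of_le_one_sub_mul_add {u a c : ℕ → ℝ} (hu : ∀ n, 0 ≤ u n)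
    (ha : ∀ n, 0 ≤ a n) (hdiv : ¬ Summable a) (hc : ∀ n, 0 ≤ c n) (hcs : Summable c)
    (hrec : ∀ n, u (n + 1) ≤ (1 - a n) * u n + c n) : Tendsto u atTop (𝓝 0) := by
  refine tendsto_order.2 ⟨fun e he => .of_forall fun n => he.trans_le (hu n), fun ε hε => ?_⟩
  obtain ⟨m, hm⟩ := ((tendsto_order.1 (tendsto_sum_nat_add c)).2 (ε / 2) (half_pos hε)).exists
  have hS : Tendsto (fun j => ∑ k ∈ Finset.range j, a (k + m)) atTop atTop :=
    (not_summable_iff_tendsto_nat_atTop_of_nonneg fun k => ha _).1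
      ((summable_nat_add_iff m).not.2 hdiv)
  have hexp : Tendsto (fun j => Real.exp (-∑ k ∈ Finset.range j, a (k + m)) * u m) atTop
      (𝓝 0) := by
    simpa using (Real.tendsto_exp_atBot.comp (tendsto_neg_atTop_atBot.comp hS)).mul_const (u m)
  rw [← map_add_atTop_eq_nat m, eventually_map]
  filter_upwards [(tendsto_order.1 hexp).2 (ε / 2) (half_pos hε)] with j hj
  have hbound := le_exp_neg_sum_mul_add_sum (u := fun j => u (j + m)) (a := fun k => a (k + m))
    (c := fun k => c (k + m)) (fun j => hu _) (fun k => ha _) (fun k => hc _)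
    (fun j => by simpa only [add_right_comm j 1 m] using hrec (j + m)) j
  have htail : ∑ k ∈ Finset.range j, c (k + m) ≤ ∑' k, c (k + m) :=
    ((summable_nat_add_iff m).2 hcs).sum_le_tsum _ fun k _ => hc _
  simp only [zero_add] at hbound
  linarith

theorem tendsto_zero_of_le_one_sub_mul_add_mul {s a b : ℕ → ℝ} (hs : ∀ n, 0 ≤ s n)
    (ha : ∀ n, a n ∈ Set.Icc (0 : ℝ) 1) (hdiv : ¬ Summable a)
    (hb : ∀ ε > 0, ∀ᶠ n in atTop, b n < ε)
    (hrec : ∀ n, s (n + 1) ≤ (1 - a n) * s n + a n * b n) : Tendsto s atTop (𝓝 0) := by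
  refine tendsto_order.2 ⟨fun e he => .of_forall fun n => he.trans_le (hs n), fun ε hε => ?_⟩
  obtain ⟨N, hN⟩ := eventually_atTop.1 (hb (ε / 2) (half_pos hε))
  have ht : Tendsto (fun j => max (s (j + N) - ε / 2) 0) atTop (𝓝 0) := by
    refine tendsto_zero_of_le_one_sub_mul_add (a := fun j => a (j + N)) (c := 0)
      (fun j => le_max_right _ _) (fun j => (ha _).1) ((summable_nat_add_iff N).not.2 hdiv)
      (fun _ => le_rfl) summable_zero fun j => ?_
    have h1 : 0 ≤ 1 - a (j + N) := sub_nonneg.2 (ha _).2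
    have h2 : a (j + N) * b (j + N) ≤ a (j + N) * (ε / 2) :=
      mul_le_mul_of_nonneg_left (hN _ (by omega)).le (ha _).1
    have h3 := mul_le_mul_of_nonneg_left (le_max_left (s (j + N) - ε / 2) 0) h1
    simp only [Pi.zero_apply, add_zero, add_right_comm j 1 N]
    refine max_le ?_ (mul_nonneg h1 (le_max_right _ _))
    linarith [hrec (j + N)]
  rw [← map_add_atTop_eq_nat N, eventually_map]
  filter_upwards [(tendsto_order.1 ht).2 (ε / 2) (half_pos hε)] with j hj
  linarith [le_max_left (s (j + N) - ε / 2) 0]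

section FixedPoints

variable {E : Type*} [NormedAddCommGroup E] {T : E → E} {s : Set E}

lemma NonexpansiveOn.norm_sub_le (hT : NonexpansiveOn T s) {x y : E} (hx : x ∈ s) (hy : y ∈ s) :
    ‖T x - T y‖ ≤ ‖x - y‖ := by
  simpa [dist_eq_norm] using hT.dist_le_mul x hx y hy

lemma NonexpansiveOn.quasiNonexpansiveOn (hT : NonexpansiveOn T s) :
    QuasiNonexpansiveOn T s := fun _ hx y hy => by
  simpa only [hy.1.eq] using hT.norm_sub_le hx hy.2

lemma QuasiNonexpansiveOn.isClosed_fixSet_inter (hT : QuasiNonexpansiveOn T s)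
    (hs : IsClosed s) : IsClosed (FixSet T ∩ s) := by
  refine isClosed_of_closure_subset fun x hx => ?_
  have hxs : x ∈ s := hs.closure_subset (closure_mono Set.inter_subset_right hx)
  refine ⟨eq_of_forall_dist_le fun ε hε => ?_, hxs⟩
  obtain ⟨y, hy, hxy⟩ := Metric.mem_closure_iff.1 hx (ε / 2) (half_pos hε)
  calc dist (T x) x ≤ dist (T x) y + dist x y := dist_triangle_right _ _ _
    _ ≤ dist x y + dist x y := by
        gcongr
        simpa only [dist_eq_norm] using hT hxs hy
    _ ≤ ε := by linarith

lemma QuasiNonexpansiveOn.convex_fixSet_inter [NormedSpace ℝ E] [StrictConvexSpace ℝ E]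
    (hT : QuasiNonexpansiveOn T s) (hs : Convex ℝ s) : Convex ℝ (FixSet T ∩ s) := by
  rintro x hx y hy a b ha hb hab
  have hz : a • x + b • y ∈ s := hs hx.2 hy.2 ha hb hab
  refine ⟨?_, hz⟩
  obtain rfl : a = 1 - b := by linarith
  set z := (1 - b) • x + b • y with hz_def
  have hxz : dist x (T z) ≤ b * dist x y := by
    rw [dist_comm, dist_eq_norm, dist_eq_norm]
    refine (hT hz hx).trans_eq ?_
    rw [show z - x = b • (y - x) by rw [hz_def]; module, norm_smul, Real.norm_of_nonneg hb,
      norm_sub_rev]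
  have hzy : dist (T z) y ≤ (1 - b) * dist x y := by
    rw [dist_eq_norm, dist_eq_norm]
    refine (hT hz hy).trans_eq ?_
    rw [show z - y = (1 - b) • (x - y) by rw [hz_def]; module, norm_smul, Real.norm_of_nonneg ha]
  -- Both bounds are equalities by the triangle inequality, and in a strictly convex space
  -- this forces `T z` to be the point of the segment `[x, y]` at parameter `b`, i.e. `z`.
  have := eq_lineMap_of_dist_eq_mul_of_dist_eq_mul (le_antisymm hxz ?_) (le_antisymm hzy ?_)
  · rwa [AffineMap.lineMap_apply_module] at this
  all_goals linarith [dist_triangle x (T z) y]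

end FixedPoints

section WeakLimits

variable {ι : Type*}

lemma exists_tendsto_inner_of_norm_le [CompleteSpace H] (U : Ultrafilter ι) {y : ι → H} {c : ℝ}
    (hy : ∀ i, ‖y i‖ ≤ c) : ∃ q : H, ∀ z, Tendsto (fun i => ⟪y i, z⟫_ℝ) U (𝓝 ⟪q, z⟫_ℝ) := by
  let Y : ι → WeakDual ℝ H := fun i => StrongDual.toWeakDual (InnerProductSpace.toDual ℝ H (y i))
  have hY : ∀ i, Y i ∈ WeakDual.toStrongDual ⁻¹' Metric.closedBall 0 c := fun i => by
    simpa [Y] using hy i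
  obtain ⟨f, -, hf⟩ := (WeakDual.isCompact_closedBall 0 c).ultrafilter_le_nhds (U.map Y)
    (le_principal_iff.2 (mem_map.2 (Eventually.of_forall hY)))
  refine ⟨(InnerProductSpace.toDual ℝ H).symm (WeakDual.toStrongDual f), fun z => ?_⟩
  simpa [Y, Function.comp_def] using (WeakDual.eval_continuous z).continuousAt.tendsto.comp hf

lemma Convex.mem_of_tendsto_inner [CompleteSpace H] {s : Set H} (hs : Convex ℝ s)
    (hs' : IsClosed s) {l : Filter ι} [l.NeBot] {y : ι → H} {q : H} (hys : ∀ᶠ i in l, y i ∈ s)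
    (hq : ∀ z, Tendsto (fun i => ⟪y i, z⟫_ℝ) l (𝓝 ⟪q, z⟫_ℝ)) : q ∈ s := by
  by_contra hqs
  obtain ⟨f, r, hfq, hfs⟩ := geometric_hahn_banach_point_closed hs hs' hqs
  have hf : ∀ w, f w = ⟪w, (InnerProductSpace.toDual ℝ H).symm f⟫_ℝ := fun w => by
    rw [real_inner_comm, InnerProductSpace.toDual_symm_apply]
  have hlim := hq ((InnerProductSpace.toDual ℝ H).symm f)
  simp only [← hf] at hlim
  exact hfq.not_ge (ge_of_tendsto hlim (hys.mono fun i hi => (hfs _ hi).le))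

variable {T : H → H} {s : Set H}

lemma NonexpansiveOn.isFixedPt_of_tendsto_inner (hT : NonexpansiveOn T s) {l : Filter ι}
    [l.NeBot] {y : ι → H} {q : H} {c : ℝ} (hys : ∀ i, y i ∈ s) (hqs : q ∈ s)
    (hy : ∀ i, ‖y i‖ ≤ c) (hq : ∀ z, Tendsto (fun i => ⟪y i, z⟫_ℝ) l (𝓝 ⟪q, z⟫_ℝ))
    (hreg : Tendsto (fun i => ‖y i - T (y i)‖) l (𝓝 0)) : IsFixedPt T q := by
  -- `‖yᵢ - T q‖²` exceeds `‖yᵢ - q‖²` by `‖q - T q‖²` plus a weakly null term, while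
  -- asymptotic regularity and nonexpansiveness bound it by `‖yᵢ - q‖² + o(1)`.
  have hbound : ∀ i, ‖q - T q‖ ^ 2 + 2 * ⟪y i - q, q - T q⟫_ℝ
      ≤ ‖y i - T (y i)‖ ^ 2 + 2 * ‖y i - T (y i)‖ * (c + ‖q‖) := by
    intro i
    have htri : ‖y i - T q‖ ≤ ‖y i - T (y i)‖ + ‖y i - q‖ :=
      (norm_sub_le_norm_sub_add_norm_sub _ (T (y i)) _).trans
        (add_le_add_right (hT.norm_sub_le (hys i) hqs) _)
    have hexpand : ‖y i - T q‖ ^ 2 = ‖y i - q‖ ^ 2 + 2 * ⟪y i - q, q - T q⟫_ℝ + ‖q - T q‖ ^ 2 := by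
      rw [← norm_add_sq_real, sub_add_sub_cancel]
    have hyq : ‖y i - q‖ ≤ c + ‖q‖ := norm_sub_le_of_le (hy i) le_rfl
    nlinarith [pow_le_pow_left₀ (norm_nonneg _) htri 2,
      mul_le_mul_of_nonneg_left hyq (norm_nonneg (y i - T (y i)))]
  have hcross : Tendsto (fun i => ⟪y i - q, q - T q⟫_ℝ) l (𝓝 0) := by
    simpa [inner_sub_left] using (hq (q - T q)).sub_const ⟪q, q - T q⟫_ℝ
  have hle := le_of_tendsto_of_tendsto' ((hcross.const_mul 2).const_add (‖q - T q‖ ^ 2))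
    ((hreg.pow 2).add ((hreg.const_mul 2).mul_const (c + ‖q‖))) hbound
  have hsq : ‖q - T q‖ ^ 2 ≤ 0 := by simpa using hle
  rw [sq_nonpos_iff, norm_eq_zero, sub_eq_zero] at hsq
  exact hsq.symm

lemma NonexpansiveOn.eventually_inner_lt [CompleteSpace H] (hT : NonexpansiveOn T s)
    (hs : Convex ℝ s) (hs' : IsClosed s) {l : Filter ι} {y : ι → H} {c : ℝ} (hys : ∀ i, y i ∈ s)
    (hy : ∀ i, ‖y i‖ ≤ c) (hreg : Tendsto (fun i => ‖y i - T (y i)‖) l (𝓝 0)) {v : H} {r : ℝ}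
    (hr : ∀ w ∈ FixSet T ∩ s, ⟪w, v⟫_ℝ < r) : ∀ᶠ i in l, ⟪y i, v⟫_ℝ < r := by
  by_contra h
  have : (l ⊓ 𝓟 {i | r ≤ ⟪y i, v⟫_ℝ}).NeBot := by
    simpa only [not_lt] using frequently_iff_neBot.1 (not_eventually.1 h)
  let U := Ultrafilter.of (l ⊓ 𝓟 {i | r ≤ ⟪y i, v⟫_ℝ})
  have hUl : (U : Filter ι) ≤ l := (Ultrafilter.of_le _).trans inf_le_left
  have hUr : ∀ᶠ i in (U : Filter ι), r ≤ ⟪y i, v⟫_ℝ :=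
    (Ultrafilter.of_le _).trans inf_le_right (mem_principal_self _)
  obtain ⟨q, hq⟩ := exists_tendsto_inner_of_norm_le U hy
  have hqs := hs.mem_of_tendsto_inner hs' (.of_forall hys) hq
  have hqT := hT.isFixedPt_of_tendsto_inner hys hqs hy hq (hreg.mono_left hUl)
  exact (hr q ⟨hqT, hqs⟩).not_ge (ge_of_tendsto (hq v) hUr)

end WeakLimits

lemma norm_smul_add_one_sub_smul_sq_le {a : ℝ} (ha : a ∈ Set.Icc (0 : ℝ) 1) (v w : H) :
    ‖a • v + (1 - a) • w‖ ^ 2 ≤ (1 - a) * ‖w‖ ^ 2 + a * (2 * ⟪a • v + (1 - a) • w, v⟫_ℝ) := by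
  have hexpand : ‖a • v + (1 - a) • w‖ ^ 2 + ‖a • v‖ ^ 2
      = ‖(1 - a) • w‖ ^ 2 + 2 * ⟪a • v + (1 - a) • w, a • v⟫_ℝ := by
    simp only [← real_inner_self_eq_norm_sq, inner_add_left, inner_add_right,
      real_inner_comm (a • v) ((1 - a) • w)]
    ring
  rw [norm_smul, norm_smul, Real.norm_of_nonneg ha.1, Real.norm_of_nonneg (sub_nonneg.2 ha.2),
    real_inner_smul_right] at hexpand
  nlinarith [sq_nonneg (a * ‖v‖), mul_nonneg (mul_nonneg ha.1 (sub_nonneg.2 ha.2)) (sq_nonneg ‖w‖)]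

namespace Halpern

variable {T : H → H} (alg : Halpern T) {D : Set H}

lemma succ_sub_eq (n : ℕ) (q : H) :
    alg.x (n + 1) - q = alg.α n • (alg.u - q) + (1 - alg.α n) • (T (alg.x n) - q) := by
  rw [alg.update]; module

lemma succ_succ_sub_eq (n : ℕ) :
    alg.x (n + 1 + 1) - alg.x (n + 1) = (alg.α (n + 1) - alg.α n) • (alg.u - T (alg.x n))
      + (1 - alg.α (n + 1)) • (T (alg.x (n + 1)) - T (alg.x n)) := by
  rw [alg.update (n + 1), alg.update n]; module

lemma norm_sub_le_max (hT : QuasiNonexpansiveOn T D) (hxD : ∀ n, alg.x n ∈ D)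
    (hα : ∀ n, alg.α n ∈ Set.Icc (0 : ℝ) 1) {q : H} (hq : q ∈ FixSet T ∩ D) (n : ℕ) :
    ‖alg.x n - q‖ ≤ max ‖alg.x0 - q‖ ‖alg.u - q‖ := by
  induction n with
  | zero => rw [alg.initial_value]; exact le_max_left _ _
  | succ n ih =>
    have hu : alg.u - q ∈ Metric.closedBall (0 : H) (max ‖alg.x0 - q‖ ‖alg.u - q‖) := by simp
    have hTx : T (alg.x n) - q ∈ Metric.closedBall (0 : H) (max ‖alg.x0 - q‖ ‖alg.u - q‖) := by
      simpa using (hT (hxD n) hq).trans ih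
    simpa [alg.succ_sub_eq] using
      convex_closedBall (0 : H) _ hu hTx (hα n).1 (sub_nonneg.2 (hα n).2) (by ring)

lemma norm_le (hT : QuasiNonexpansiveOn T D) (hxD : ∀ n, alg.x n ∈ D)
    (hα : ∀ n, alg.α n ∈ Set.Icc (0 : ℝ) 1) {q : H} (hq : q ∈ FixSet T ∩ D) (n : ℕ) :
    ‖alg.x n‖ ≤ max ‖alg.x0 - q‖ ‖alg.u - q‖ + ‖q‖ := by
  linarith [norm_le_insert' (alg.x n) q, alg.norm_sub_le_max hT hxD hα hq n]

lemma norm_u_sub_apply_le (hT : QuasiNonexpansiveOn T D) (hxD : ∀ n, alg.x n ∈ D)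
    (hα : ∀ n, alg.α n ∈ Set.Icc (0 : ℝ) 1) {q : H} (hq : q ∈ FixSet T ∩ D) (n : ℕ) :
    ‖alg.u - T (alg.x n)‖ ≤ max ‖alg.x0 - q‖ ‖alg.u - q‖ + max ‖alg.x0 - q‖ ‖alg.u - q‖ := by
  rw [← sub_sub_sub_cancel_right _ _ q]
  exact norm_sub_le_of_le (le_max_right _ _)
    ((hT (hxD n) hq).trans (alg.norm_sub_le_max hT hxD hα hq n))

lemma tendsto_norm_succ_sub (hT : NonexpansiveOn T D) (hxD : ∀ n, alg.x n ∈ D)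
    (hα : ∀ n, alg.α n ∈ Set.Icc (0 : ℝ) 1) (hdiv : ¬ Summable alg.α)
    (hαbv : Summable fun n => |alg.α (n + 1) - alg.α n|) {K : ℝ}
    (hK : ∀ n, ‖alg.u - T (alg.x n)‖ ≤ K) :
    Tendsto (fun n => ‖alg.x (n + 1) - alg.x n‖) atTop (𝓝 0) := by
  have hK0 : 0 ≤ K := (norm_nonneg _).trans (hK 0)
  refine tendsto_zero_of_le_one_sub_mul_add (a := fun n => alg.α (n + 1))
    (c := fun n => K * |alg.α (n + 1) - alg.α n|) (fun n => norm_nonneg _) (fun n => (hα _).1)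
    ((summable_nat_add_iff 1).not.2 hdiv) (fun n => mul_nonneg hK0 (abs_nonneg _))
    (hαbv.mul_left K) fun n => ?_
  have h1 : 0 ≤ 1 - alg.α (n + 1) := sub_nonneg.2 (hα _).2
  calc ‖alg.x (n + 1 + 1) - alg.x (n + 1)‖
      ≤ |alg.α (n + 1) - alg.α n| * ‖alg.u - T (alg.x n)‖
        + (1 - alg.α (n + 1)) * ‖T (alg.x (n + 1)) - T (alg.x n)‖ := by
        rw [alg.succ_succ_sub_eq]
        refine (norm_add_le _ _).trans_eq ?_
        rw [norm_smul, norm_smul, Real.norm_eq_abs, Real.norm_of_nonneg h1]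
    _ ≤ (1 - alg.α (n + 1)) * ‖alg.x (n + 1) - alg.x n‖ + K * |alg.α (n + 1) - alg.α n| := by
        nlinarith [mul_le_mul_of_nonneg_left (hK n) (abs_nonneg (alg.α (n + 1) - alg.α n)),
          mul_le_mul_of_nonneg_left (hT.norm_sub_le (hxD (n + 1)) (hxD n)) h1]

lemma tendsto_norm_sub_apply (hT : NonexpansiveOn T D) (hxD : ∀ n, alg.x n ∈ D)
    (hα : ∀ n, alg.α n ∈ Set.Icc (0 : ℝ) 1) (hα0 : Tendsto alg.α atTop (𝓝 0))
    (hdiv : ¬ Summable alg.α) (hαbv : Summable fun n => |alg.α (n + 1) - alg.α n|) {K : ℝ}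
    (hK : ∀ n, ‖alg.u - T (alg.x n)‖ ≤ K) :
    Tendsto (fun n => ‖alg.x n - T (alg.x n)‖) atTop (𝓝 0) := by
  refine squeeze_zero (fun n => norm_nonneg _) (fun n => ?_) (by
    simpa using (alg.tendsto_norm_succ_sub hT hxD hα hdiv hαbv hK).add (hα0.mul_const K))
  have h : alg.x (n + 1) - T (alg.x n) = alg.α n • (alg.u - T (alg.x n)) := by
    rw [alg.update]; module
  calc ‖alg.x n - T (alg.x n)‖ ≤ ‖alg.x (n + 1) - alg.x n‖ + ‖alg.x (n + 1) - T (alg.x n)‖ := by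
        rw [norm_sub_rev (alg.x (n + 1))]; exact norm_sub_le_norm_sub_add_norm_sub _ _ _
    _ ≤ ‖alg.x (n + 1) - alg.x n‖ + alg.α n * K := by
        rw [h, norm_smul, Real.norm_of_nonneg (hα n).1]
        exact add_le_add_right (mul_le_mul_of_nonneg_left (hK n) (hα n).1) _

lemma norm_succ_sub_sq_le (hT : QuasiNonexpansiveOn T D) (hxD : ∀ n, alg.x n ∈ D)
    (hα : ∀ n, alg.α n ∈ Set.Icc (0 : ℝ) 1) {p : H} (hp : p ∈ FixSet T ∩ D) (n : ℕ) :
    ‖alg.x (n + 1) - p‖ ^ 2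
      ≤ (1 - alg.α n) * ‖alg.x n - p‖ ^ 2 + alg.α n * (2 * ⟪alg.x (n + 1) - p, alg.u - p⟫_ℝ) := by
  have h := norm_smul_add_one_sub_smul_sq_le (hα n) (alg.u - p) (T (alg.x n) - p)
  rw [← alg.succ_sub_eq] at h
  refine h.trans (add_le_add_left ?_ _)
  exact mul_le_mul_of_nonneg_left (pow_le_pow_left₀ (norm_nonneg _) (hT (hxD n) hp) 2)
    (sub_nonneg.2 (hα n).2)

end Halpern

theorem halpern_convergence_general [CompleteSpace H]
    {D : Set H} (hD_closed : IsClosed D) (hD_convex : Convex ℝ D)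
    {T : H → H} (hT_nonexp : NonexpansiveOn T D)
    {C : Set H} (hC : C = FixSet T ∩ D) (hCn : C.Nonempty)
    (alg : Halpern T)
    (halg_xD : ∀ n, alg.x n ∈ D)
    (hα1 : ∀ n, alg.α n ∈ Set.Ioo (0 : ℝ) 1)
    (hα2 : Tendsto alg.α atTop (nhds 0))
    (hα3 : Tendsto (fun N => ∑ n ∈ Finset.range N, alg.α n) atTop atTop)
    (hα4 : Summable (fun n => |alg.α (n + 1) - alg.α n|)) :
    ∃ p : H, p ∈ C ∧ Tendsto alg.x atTop (nhds p) ∧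
      ‖alg.u - p‖ = ⨅ w : C, ‖alg.u - w‖ := by
  subst hC
  have hT := hT_nonexp.quasiNonexpansiveOn
  have hα : ∀ n, alg.α n ∈ Set.Icc (0 : ℝ) 1 := fun n => Set.Ioo_subset_Icc_self (hα1 n)
  have hdiv : ¬ Summable alg.α :=
    (not_summable_iff_tendsto_nat_atTop_of_nonneg fun n => (hα n).1).2 hα3
  have hC_convex := hT.convex_fixSet_inter hD_convex
  obtain ⟨p, hpC, hpmin⟩ := exists_norm_eq_iInf_of_complete_convex hCn
    (hT.isClosed_fixSet_inter hD_closed).isComplete hC_convex alg.u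
  have hvar := (norm_eq_iInf_iff_real_inner_le_zero hC_convex hpC).1 hpmin
  have hreg := alg.tendsto_norm_sub_apply hT_nonexp halg_xD hα hα2 hdiv hα4
    (alg.norm_u_sub_apply_le hT halg_xD hα hpC)
  have hlimsup : ∀ ε > 0, ∀ᶠ n in atTop, 2 * ⟪alg.x (n + 1) - p, alg.u - p⟫_ℝ < ε := by
    intro ε hε
    have h := hT_nonexp.eventually_inner_lt hD_convex hD_closed halg_xD
      (alg.norm_le hT halg_xD hα hpC) hreg (v := alg.u - p) (r := ⟪p, alg.u - p⟫_ℝ + ε / 2)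
      fun w hw => by linarith [hvar w hw, real_inner_comm (alg.u - p) (w - p),
        inner_sub_left (𝕜 := ℝ) w p (alg.u - p)]
    filter_upwards [(tendsto_add_atTop_nat 1).eventually h] with n hn
    linarith [inner_sub_left (𝕜 := ℝ) (alg.x (n + 1)) p (alg.u - p)]
  have hsq := tendsto_zero_of_le_one_sub_mul_add_mul (s := fun n => ‖alg.x n - p‖ ^ 2)
    (fun n => sq_nonneg _) hα hdiv hlimsup (alg.norm_succ_sub_sq_le hT halg_xD hα hpC)
  refine ⟨p, hpC, tendsto_iff_norm_sub_tendsto_zero.2 ?_, hpmin⟩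
  simpa using hsq.sqrt

theorem halpern_convergence [CompleteSpace H] [SeparableSpace H]
    {D : Set H} (hD_closed : IsClosed D) (hD_convex : Convex ℝ D) (hD_nonempty : D.Nonempty)
    {T : H → H} (hT_nonexp : NonexpansiveOn T D)
    {C : Set H} (hC : C = FixSet T ∩ D) (hCn : C.Nonempty)
    (hT_inD : ∀ x ∈ D, T x ∈ D) (alg : Halpern T)
    (halg_x0 : alg.x0 ∈ D) (halg_u : alg.u ∈ D) (halg_xD : ∀ n, alg.x n ∈ D)
    (hα1 : ∀ n, alg.α n ∈ Set.Ioo (0 : ℝ) 1)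
    (hα2 : Tendsto alg.α atTop (nhds 0))
    (hα3 : Tendsto (fun N => ∑ n ∈ Finset.range N, alg.α n) atTop atTop)
    (hα4 : Summable (fun n => |alg.α (n + 1) - alg.α n|)) :
    ∃ p : H, p ∈ C ∧ Tendsto alg.x atTop (nhds p) ∧
      ‖alg.u - p‖ = ⨅ w : C, ‖alg.u - w‖ :=
  halpern_convergence_general hD_closed hD_convex hT_nonexp hC hCn alg halg_xD hα1 hα2 hα3 hα4
end
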